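/- arXiv:1602.06244 — 3 statements merged into one kernel-verified Lean document; each statement's English description precedes it below -/
import Mathlib

section
/- Let F be a number field with set of archimedean embeddings Σ, and let r = (r_σ) ∈ Z[Σ]. Then r can be realized as the infinity type of an (arithmetic) Hecke character of F if and only if there exists a positive integer n such that ∏_{σ∈Σ} σ(ε)^{n r_σ} = 1 for every unit ε of the ring of integers of F. -/
/-!
If `φ` is a Hecke character of modulus `f` with infinity type `r`, then for a suitable `n > 0`
the power `ε ^ n` of every unit is totally positive and `≡ 1 mod f`; since it generates the unit
ideal, `∏ σ, σ(ε) ^ (n r_σ) = φ(1) = 1`.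

Conversely, let `χ(x) = ∏ σ, σ(x) ^ r_σ` and take `f = (n + 1)`. For a unit `u ≡ 1 mod f`, `χ(u)`
is a unit of the ring of all algebraic integers, congruent to `1` modulo `n + 1`, with
`χ(u) ^ n = 1`. Since `ζ - 1` divides `n` for every `n`-th root of unity `ζ ≠ 1`, while `n + 1`
does not divide `n` there, `χ(u) = 1`. Hence on the ray group modulo `f`, `χ` only depends on the
principal ideal `(x)`, and it extends from principal ideals to all fractional ideals because
`ℂˣ` is divisible.
-/

open NumberField

/-- `r ∈ ℤ[Σ]` is the infinity type of an arithmetic (narrow) Hecke character of `F`, phrased in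
classical ideal-theoretic terms: there is a modulus `f` and a function `φ` on ideals of `𝓞 F`,
multiplicative and nonvanishing on ideals coprime to `f`, such that on principal ideals generated
by totally positive `α ≡ 1 (mod f)` it takes the value `∏ σ, σ(α) ^ r_σ`. -/
def IsInfinityType (F : Type*) [Field F] [NumberField F] (r : (F →+* ℂ) → ℤ) : Prop :=
  ∃ f : Ideal (𝓞 F), f ≠ ⊥ ∧
    ∃ φ : Ideal (𝓞 F) → ℂ,
      (∀ I J : Ideal (𝓞 F), IsCoprime I f → IsCoprime J f → φ (I * J) = φ I * φ J) ∧
      (∀ I : Ideal (𝓞 F), IsCoprime I f → φ I ≠ 0) ∧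
      (∀ α : 𝓞 F, α ≠ 0 → α - 1 ∈ f →
        (∀ τ : F →+* ℝ, 0 < τ (algebraMap (𝓞 F) F α)) →
        φ (Ideal.span {α}) = ∏ σ : F →+* ℂ, σ (algebraMap (𝓞 F) F α) ^ r σ)

open scoped nonZeroDivisors

theorem natCast_dvd_natCast_integralClosure_iff {m n : ℕ} :
    (m : integralClosure ℤ ℂ) ∣ n ↔ m ∣ n := by
  refine ⟨fun ⟨w, hw⟩ => ?_, Nat.cast_dvd_cast⟩
  rcases Nat.eq_zero_or_pos m with rfl | hm
  · simp_all
  have hw' : algebraMap ℚ ℂ (n / m) = w := by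
    have := congrArg Subtype.val hw
    push_cast at this ⊢
    rw [this, mul_div_cancel_left₀ _ (by exact_mod_cast hm.ne')]
  have hint : IsIntegral ℤ (n / m : ℚ) := by
    rw [← isIntegral_algebraMap_iff (algebraMap ℚ ℂ).injective, hw']
    exact w.2
  obtain ⟨k, hk⟩ := IsIntegrallyClosed.isIntegral_iff.mp hint
  rw [← Int.natCast_dvd_natCast]
  refine ⟨k, ?_⟩
  have : (k : ℚ) = n / m := hk
  field_simp at this
  exact_mod_cast this.symm.trans (mul_comm _ _)

theorem eq_one_of_pow_eq_one_of_natCast_dvd_sub_one {ζ : integralClosure ℤ ℂ} {n M : ℕ}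
    (hζn : ζ ^ n = 1) (hζM : (M : integralClosure ℤ ℂ) ∣ ζ - 1) (hMn : ¬ M ∣ n) : ζ = 1 := by
  by_contra hζ
  exact hMn (natCast_dvd_natCast_integralClosure_iff.mp
    (hζM.trans (sub_one_dvd_natCast_of_pow_eq_one hζn hζ)))

noncomputable instance : DivisibleBy (Additive ℂˣ) ℤ :=
  divisibleByOfSMulRightSurj _ _ fun {n} hn x =>
    ⟨.ofMul (Units.mk0 (Complex.exp (Complex.log (x.toMul : ℂ) / n)) (Complex.exp_ne_zero _)), by
      apply Additive.toMul.injective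
      ext
      simp [← Complex.exp_int_mul, mul_div_cancel₀, hn, Complex.exp_log]⟩

theorem MonoidHom.exists_comp_eq_of_ker_le {A G B : Type*} [CommGroup A] [CommGroup G]
    [CommGroup B] [DivisibleBy (Additive B) ℤ] (j : A →* G) (c : A →* B) (h : j.ker ≤ c.ker) :
    ∃ Ψ : G →* B, Ψ.comp j = c := by
  obtain ⟨Ψ, hΨ⟩ := (Module.Baer.of_divisible (A := Additive B)).extension_property_addMonoidHom
    (QuotientGroup.kerLift j).toAdditive (QuotientGroup.kerLift_injective j)
    (QuotientGroup.lift j.ker c h).toAdditive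
  refine ⟨MonoidHom.toAdditive.symm Ψ, MonoidHom.ext fun a => ?_⟩
  exact congrArg Additive.toMul (DFunLike.congr_fun hΨ (.ofMul (a : A ⧸ j.ker)))

theorem Units.mem_ker_map_quotientMk_iff {R : Type*} [CommRing R] {I : Ideal R} {x : Rˣ} :
    x ∈ (Units.map (Ideal.Quotient.mk I : R →* R ⧸ I)).ker ↔ (x : R) - 1 ∈ I := by
  rw [MonoidHom.mem_ker, Units.ext_iff, Units.coe_map, Units.val_one,
    ← map_one (Ideal.Quotient.mk I)]
  exact Ideal.Quotient.eq

section NumberField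

variable {F : Type*} [Field F] [NumberField F] (r : (F →+* ℂ) → ℤ)

noncomputable def algChar : Fˣ →* ℂˣ := ∏ σ : F →+* ℂ, (Units.map (σ : F →* ℂ)) ^ r σ

theorem coe_algChar_apply (x : Fˣ) : (algChar r x : ℂ) = ∏ σ : F →+* ℂ, σ x ^ r σ := by
  simp [algChar, Units.coe_prod, Units.val_zpow_eq_zpow_val]

noncomputable def toIntegralClosure (σ : F →+* ℂ) : 𝓞 F →+* integralClosure ℤ ℂ :=
  (σ.comp (algebraMap (𝓞 F) F)).codRestrict (integralClosure ℤ ℂ) fun x =>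
    x.isIntegral_coe.map σ.toIntAlgHom

noncomputable def unitsChar : (𝓞 F)ˣ →* (integralClosure ℤ ℂ)ˣ :=
  ∏ σ : F →+* ℂ, (Units.map (toIntegralClosure σ : 𝓞 F →* integralClosure ℤ ℂ)) ^ r σ

theorem units_map_unitsChar (u : (𝓞 F)ˣ) :
    Units.map (integralClosure ℤ ℂ).val.toMonoidHom (unitsChar r u) =
      algChar r (Units.map (algebraMap (𝓞 F) F : 𝓞 F →* F) u) := by
  simp only [unitsChar, algChar, MonoidHom.finsetProd_apply, MonoidHom.zpow_apply, map_prod,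
    map_zpow]
  rfl

theorem coe_unitsChar_apply (u : (𝓞 F)ˣ) :
    ((unitsChar r u : integralClosure ℤ ℂ) : ℂ) =
      ∏ σ : F →+* ℂ, σ (algebraMap (𝓞 F) F u) ^ r σ :=
  (congrArg Units.val (units_map_unitsChar r u)).trans (coe_algChar_apply r _)

theorem natCast_dvd_unitsChar_sub_one {M : ℕ} {u : (𝓞 F)ˣ} (hu : (M : 𝓞 F) ∣ u - 1) :
    (M : integralClosure ℤ ℂ) ∣ (unitsChar r u : integralClosure ℤ ℂ) - 1 := by
  rw [← Ideal.mem_span_singleton, ← Units.mem_ker_map_quotientMk_iff]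
  simp only [unitsChar, MonoidHom.finsetProd_apply, MonoidHom.zpow_apply]
  refine Subgroup.prod_mem _ fun σ _ => Subgroup.zpow_mem _ ?_ _
  rw [Units.mem_ker_map_quotientMk_iff, Ideal.mem_span_singleton, Units.coe_map]
  simpa using map_dvd (toIntegralClosure σ) hu

theorem unitsChar_eq_one_of_natCast_dvd {M n : ℕ} (hMn : ¬ M ∣ n)
    (h : ∀ ε, unitsChar r ε ^ n = 1) {u : (𝓞 F)ˣ} (hu : (M : 𝓞 F) ∣ u - 1) : unitsChar r u = 1 :=
  Units.ext (eq_one_of_pow_eq_one_of_natCast_dvd_sub_one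
    (by rw [← Units.val_pow_eq_pow_val, h, Units.val_one]) (natCast_dvd_unitsChar_sub_one r hu) hMn)

def raySubmonoid (f : Ideal (𝓞 F)) : Submonoid (𝓞 F) where
  carrier := {α | α ≠ 0 ∧ α - 1 ∈ f ∧ ∀ τ : F →+* ℝ, 0 < τ (algebraMap (𝓞 F) F α)}
  one_mem' := ⟨one_ne_zero, by simp, fun τ => by simp⟩
  mul_mem' := by
    rintro a b ⟨ha0, haf, hapos⟩ ⟨hb0, hbf, hbpos⟩
    refine ⟨mul_ne_zero ha0 hb0, ?_, fun τ => ?_⟩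
    · simpa [mul_sub] using f.add_mem (f.mul_mem_left a hbf) haf
    · simpa using mul_pos (hapos τ) (hbpos τ)

def rayGroup (f : Ideal (𝓞 F)) : Subgroup Fˣ where
  carrier := {x | ∃ a ∈ raySubmonoid f, ∃ b ∈ raySubmonoid f,
    (x : F) * algebraMap (𝓞 F) F b = algebraMap (𝓞 F) F a}
  one_mem' := ⟨1, one_mem _, 1, one_mem _, by simp⟩
  mul_mem' := by
    rintro x y ⟨a, ha, b, hb, hx⟩ ⟨c, hc, d, hd, hy⟩
    refine ⟨a * c, mul_mem ha hc, b * d, mul_mem hb hd, ?_⟩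
    simp only [Units.val_mul, map_mul]
    linear_combination (y : F) * algebraMap (𝓞 F) F d * hx + algebraMap (𝓞 F) F a * hy
  inv_mem' := by
    rintro x ⟨a, ha, b, hb, hx⟩
    refine ⟨b, hb, a, ha, ?_⟩
    rw [Units.val_inv_eq_inv_val, ← hx, inv_mul_cancel_left₀ x.ne_zero]

theorem exists_unit_of_mem_rayGroup {f : Ideal (𝓞 F)} {x : Fˣ} (hx : x ∈ rayGroup f)
    (h1 : toPrincipalIdeal (𝓞 F) F x = 1) :
    ∃ u : (𝓞 F)ˣ, (u : 𝓞 F) - 1 ∈ f ∧ Units.map (algebraMap (𝓞 F) F : 𝓞 F →* F) u = x := by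
  obtain ⟨a, ⟨-, haf, -⟩, b, ⟨-, hbf, -⟩, hab⟩ := hx
  rw [toPrincipalIdeal_eq_iff, Units.val_one, ← FractionalIdeal.spanSingleton_one, eq_comm,
    FractionalIdeal.spanSingleton_eq_spanSingleton] at h1
  obtain ⟨u, hu⟩ := h1
  have hux : algebraMap (𝓞 F) F u = x := by simpa [Units.smul_def, Algebra.smul_def] using hu
  have hub : (u : 𝓞 F) * b = a :=
    FaithfulSMul.algebraMap_injective (𝓞 F) F (by rw [map_mul, hux, hab])
  refine ⟨u, ?_, Units.ext hux⟩
  rw [← Ideal.Quotient.eq, map_one] at haf hbf ⊢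
  simpa [hbf, haf] using congrArg (Ideal.Quotient.mk f) hub

theorem exists_pow_mem_raySubmonoid {f : Ideal (𝓞 F)} (hf : f ≠ ⊥) :
    ∃ n : ℕ, 0 < n ∧ ∀ ε : (𝓞 F)ˣ, ((ε ^ n : (𝓞 F)ˣ) : 𝓞 F) ∈ raySubmonoid f := by
  have : Finite (𝓞 F ⧸ f) :=
    (Ideal.absNorm_ne_zero_iff f).mp (by rwa [Ne, Ideal.absNorm_eq_zero_iff])
  refine ⟨Nat.card (𝓞 F ⧸ f)ˣ * 2, Nat.mul_pos Nat.card_pos two_pos,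
    fun ε => ⟨Units.ne_zero _, ?_, fun τ => ?_⟩⟩
  · have h1 := congrArg Units.val (pow_card_eq_one' (G := (𝓞 F ⧸ f)ˣ)
      (x := Units.map (Ideal.Quotient.mk f : 𝓞 F →* 𝓞 F ⧸ f) ε))
    simp only [Units.val_pow_eq_pow_val, Units.coe_map, Units.val_one] at h1
    rw [← Ideal.Quotient.eq, map_one, Units.val_pow_eq_pow_val, map_pow, pow_mul]
    exact (congrArg (· ^ 2) h1).trans (one_pow 2)
  · rw [pow_mul, Units.val_pow_eq_pow_val, map_pow, map_pow]
    exact pow_two_pos_of_ne_zero (by simp)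

theorem IsInfinityType.exists_unitsChar_pow_eq_one (h : IsInfinityType F r) :
    ∃ n : ℕ, 0 < n ∧ ∀ ε, unitsChar r ε ^ n = 1 := by
  obtain ⟨f, hf, φ, -, -, hφ⟩ := h
  obtain ⟨n, hn, hpow⟩ := exists_pow_mem_raySubmonoid hf
  refine ⟨n, hn, fun ε => ?_⟩
  obtain ⟨hε0, hεf, hεpos⟩ := hpow ε
  have h1 := hφ 1 one_ne_zero (by simp) (by simp)
  have hε := hφ _ hε0 hεf hεpos
  rw [Ideal.span_singleton_eq_top.mpr (Units.isUnit _), ← Ideal.span_singleton_one, h1] at hε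
  ext
  rw [← map_pow, coe_unitsChar_apply, ← hε]
  simp

theorem isInfinityType_of_comp_eq {f : Ideal (𝓞 F)} (hf : f ≠ ⊥) (hf' : f ≠ ⊤)
    (Ψ : (FractionalIdeal (𝓞 F)⁰ F)ˣ →* ℂˣ)
    (hΨ : Ψ.comp ((toPrincipalIdeal (𝓞 F) F).comp (rayGroup f).subtype) =
      (algChar r).comp (rayGroup f).subtype) :
    IsInfinityType F r := by
  classical
  have hne {I : Ideal (𝓞 F)} (hI : I ≠ ⊥) : (I : FractionalIdeal (𝓞 F)⁰ F) ≠ 0 :=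
    FractionalIdeal.coeIdeal_ne_zero.mpr hI
  have hcop {I : Ideal (𝓞 F)} (hI : IsCoprime I f) : I ≠ ⊥ := by
    rintro rfl
    exact hf' (by simpa [Ideal.isCoprime_iff_sup_eq] using hI)
  refine ⟨f, hf, fun I => if hI : I = ⊥ then 1 else Ψ (Units.mk0 _ (hne hI)),
    fun I J hI hJ => ?_, fun I hI => ?_, fun α hα0 hαf hαpos => ?_⟩
  · dsimp only
    rw [dif_neg (show I * J ≠ ⊥ from mul_ne_zero (hcop hI) (hcop hJ)), dif_neg (hcop hI),
      dif_neg (hcop hJ), ← Units.val_mul, ← map_mul]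
    congr 2
    ext
    simp [FractionalIdeal.coeIdeal_mul]
  · dsimp only
    rw [dif_neg (hcop hI)]
    exact Units.ne_zero _
  · have hα : Units.mk0 (algebraMap (𝓞 F) F α) (by simpa using hα0) ∈ rayGroup f :=
      ⟨α, ⟨hα0, hαf, hαpos⟩, 1, one_mem _, by simp⟩
    have hΨα := congrArg Units.val (DFunLike.congr_fun hΨ ⟨_, hα⟩)
    simp only [MonoidHom.comp_apply, Subgroup.coe_subtype, coe_algChar_apply,
      Units.val_mk0] at hΨα
    dsimp only
    rw [dif_neg (by simpa using hα0), ← hΨα]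
    congr 2
    ext
    simp [FractionalIdeal.coeIdeal_span_singleton]

theorem ker_le_ker_algChar_of_unitsChar {f : Ideal (𝓞 F)}
    (hf : ∀ u : (𝓞 F)ˣ, (u : 𝓞 F) - 1 ∈ f → unitsChar r u = 1) :
    ((toPrincipalIdeal (𝓞 F) F).comp (rayGroup f).subtype).ker ≤
      ((algChar r).comp (rayGroup f).subtype).ker := fun x hx => by
  obtain ⟨u, huf, hux⟩ := exists_unit_of_mem_rayGroup x.2 (MonoidHom.mem_ker.mp hx)
  rw [MonoidHom.mem_ker, MonoidHom.comp_apply, Subgroup.coe_subtype, ← hux,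
    ← units_map_unitsChar, hf u huf, map_one]

theorem span_natCast_ne_top {m : ℕ} (hm : m ≠ 1) : Ideal.span {(m : 𝓞 F)} ≠ ⊤ := by
  rw [Ne, ← Ideal.absNorm_eq_one_iff, Ideal.absNorm_span_natCast, Nat.pow_eq_one]
  simp [hm, Module.finrank_pos.ne']

theorem isInfinityType_of_unitsChar_pow_eq_one {n : ℕ} (hn : 0 < n)
    (h : ∀ ε, unitsChar r ε ^ n = 1) : IsInfinityType F r := by
  set f := Ideal.span {((n + 1 : ℕ) : 𝓞 F)}
  have hf : f ≠ ⊥ := by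
    rw [Ne, Ideal.span_singleton_eq_bot]
    exact_mod_cast n.succ_ne_zero
  have hf' : f ≠ ⊤ := span_natCast_ne_top (by omega)
  obtain ⟨Ψ, hΨ⟩ := MonoidHom.exists_comp_eq_of_ker_le _ _ <|
    ker_le_ker_algChar_of_unitsChar r fun u hu => unitsChar_eq_one_of_natCast_dvd r
      (Nat.not_dvd_of_pos_of_lt hn n.lt_succ_self) h (Ideal.mem_span_singleton.mp hu)
  exact isInfinityType_of_comp_eq r hf hf' Ψ hΨ

theorem unitsChar_pow_eq_one_iff (ε : (𝓞 F)ˣ) (n : ℕ) :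
    unitsChar r ε ^ n = 1 ↔
      ∏ σ : F →+* ℂ, σ (algebraMap (𝓞 F) F (ε : 𝓞 F)) ^ ((n : ℤ) * r σ) = 1 := by
  rw [← map_pow, Units.ext_iff, Units.val_one, Subtype.ext_iff, coe_unitsChar_apply]
  simp [zpow_mul]

end NumberField

/-- (Weil) `r ∈ ℤ[Σ]` is realizable as the infinity type of an arithmetic Hecke character of a
number field `F` if and only if there is a positive integer `n` with
`∏_σ σ(ε)^{n r_σ} = 1` for every unit `ε` of `𝓞 F`. -/
theorem isInfinityType_iff_units_pow
    (F : Type*) [Field F] [NumberField F] (r : (F →+* ℂ) → ℤ) :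
    IsInfinityType F r ↔
      ∃ n : ℕ, 0 < n ∧ ∀ ε : (𝓞 F)ˣ,
        ∏ σ : F →+* ℂ, σ (algebraMap (𝓞 F) F (ε : 𝓞 F)) ^ ((n : ℤ) * r σ) = 1 := by
  simp_rw [← unitsChar_pow_eq_one_iff]
  exact ⟨IsInfinityType.exists_unitsChar_pow_eq_one r,
    fun ⟨n, hn, h⟩ => isInfinityType_of_unitsChar_pow_eq_one r hn h⟩
end

section
/- If F is an imaginary quadratic field, then every pair (r,s) ∈ Z² can be realized as the infinity type of an arithmetic Hecke character of F (with respect to the two complex embeddings). -/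
open NumberField

/-! Take the modulus `f = (3)`. Every unit of an imaginary quadratic field is a root of unity, so
all its conjugates have absolute value `1`; for a unit `ε ≡ 1 mod 3` the algebraic integer
`(ε - 1) / 3` then has all conjugates of absolute value at most `2/3`, hence vanishes. Therefore
`x ↦ (x)` is injective on the group of quotients `α / β` with `α, β ≡ 1 mod 3`, and the character
`x ↦ ∏ σ (σ x) ^ r σ` of that group becomes a character of a subgroup of the group of fractional
ideals. Since `ℂˣ` is divisible, it extends to all fractional ideals. -/

theorem Complex.units_zpow_surjective {n : ℤ} (hn : n ≠ 0) :
    Function.Surjective fun z : ℂˣ => z ^ n := fun a =>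
  ⟨Units.mk0 (exp (log a / n)) (exp_ne_zero _), Units.ext <| by
    rw [Units.val_zpow_eq_zpow_val, Units.val_mk0, ← exp_int_mul,
      mul_div_cancel₀ _ (Int.cast_ne_zero.mpr hn), exp_log a.ne_zero]⟩

theorem MonoidHom.exists_extension_to_complexUnits {H G : Type*} [CommGroup H] [CommGroup G]
    {ι : H →* G} (hι : Function.Injective ι) (v : H →* ℂˣ) :
    ∃ χ : G →* ℂˣ, χ.comp ι = v := by
  let _ : DivisibleBy (Additive ℂˣ) ℤ := divisibleByOfSMulRightSurj _ _ fun hn a =>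
    ⟨_, congrArg Additive.ofMul (Classical.choose_spec (Complex.units_zpow_surjective hn a.toMul))⟩
  obtain ⟨χ, hχ⟩ := (Module.Baer.of_divisible (Additive ℂˣ)).extension_property_addMonoidHom
    ι.toAdditive hι v.toAdditive
  exact ⟨MonoidHom.toAdditive.symm χ, MonoidHom.toAdditive.injective hχ⟩

namespace Ideal

variable {R : Type*} [CommRing R]

theorem mul_sub_one_mem {I : Ideal R} {a b : R} (ha : a - 1 ∈ I) (hb : b - 1 ∈ I) :
    a * b - 1 ∈ I := by
  simpa [mul_sub] using I.add_mem (I.mul_mem_left a hb) ha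

theorem ne_top_of_forall_units_eq_one [CharZero R] {f : Ideal R}
    (hf : ∀ ε : Rˣ, (ε : R) - 1 ∈ f → ε = 1) : f ≠ ⊤ := by
  rintro rfl
  have h : (-1 : R) = 1 := by simpa using congrArg Units.val (hf (-1) Submodule.mem_top)
  exact two_ne_zero (by linear_combination -h : (2 : R) = 0)

end Ideal

namespace NumberField.Units

open InfinitePlace

variable {K : Type*} [Field K] [NumberField K]

theorem mem_torsion_of_rank_eq_zero (h : rank K = 0) (u : (𝓞 K)ˣ) : u ∈ torsion K := by
  obtain ⟨⟨ζ, e⟩, rfl, -⟩ := exist_unique_eq_mul_prod K u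
  have : IsEmpty (Fin (rank K)) := by rw [h]; infer_instance
  simp [ζ.2]

theorem rank_eq_zero_of_finrank_eq_two [IsTotallyComplex K] (h : Module.finrank ℚ K = 2) :
    rank K = 0 := by
  have : nrComplexPlaces K = 1 := by linarith [IsTotallyComplex.finrank (K := K)]
  simp [rank, card_eq_nrRealPlaces_add_nrComplexPlaces, this]

theorem eq_one_of_mem_torsion_of_sub_one_mem_span_natCast {n : ℕ} (hn : 3 ≤ n) {ε : (𝓞 K)ˣ}
    (hε : ε ∈ torsion K) (h : (ε : 𝓞 K) - 1 ∈ Ideal.span {(n : 𝓞 K)}) : ε = 1 := by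
  obtain ⟨δ, hδ⟩ := Ideal.mem_span_singleton'.mp h
  suffices δ = 0 by simpa [this, sub_eq_zero] using hδ.symm
  by_contra hδ0
  obtain ⟨σ, hσ⟩ := exists_conjugate_one_le_norm hδ0
  have hε1 : ‖σ ε‖ = 1 := (eq_iff_eq _ 1).mp ((mem_torsion K).mp hε) σ
  have hεδ : σ ε - 1 = σ δ * n := by
    have := congrArg (σ.comp (algebraMap (𝓞 K) K)) hδ
    simp only [map_mul, map_sub, map_one, map_natCast, RingHom.comp_apply] at this
    simpa [RingOfIntegers.coe_eq_algebraMap] using this.symm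
  have hbound : ‖σ δ‖ * n ≤ 2 := by
    calc ‖σ δ‖ * n = ‖σ ε - 1‖ := by rw [hεδ, norm_mul, Complex.norm_natCast]
      _ ≤ ‖σ ε‖ + ‖(1 : ℂ)‖ := norm_sub_le _ _
      _ = 2 := by rw [hε1, norm_one]; norm_num
  have hn' : (3 : ℝ) ≤ n := by exact_mod_cast hn
  nlinarith

end NumberField.Units

open scoped nonZeroDivisors

section RayGroup

variable {F : Type*} [Field F] [NumberField F]

def rayPrincipalUnits (f : Ideal (𝓞 F)) : Subgroup Fˣ where
  carrier := {x | ∃ α β : 𝓞 F, α - 1 ∈ f ∧ β - 1 ∈ f ∧ β ≠ 0 ∧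
    (x : F) * algebraMap (𝓞 F) F β = algebraMap (𝓞 F) F α}
  one_mem' := ⟨1, 1, by simp, by simp, one_ne_zero, by simp⟩
  mul_mem' := by
    rintro x y ⟨α, β, hα, hβ, hβ0, hx⟩ ⟨α', β', hα', hβ', hβ0', hy⟩
    refine ⟨α * α', β * β', Ideal.mul_sub_one_mem hα hα', Ideal.mul_sub_one_mem hβ hβ',
      mul_ne_zero hβ0 hβ0', ?_⟩
    simp only [Units.val_mul, map_mul, ← hx, ← hy]
    ring
  inv_mem' := by
    rintro x ⟨α, β, hα, hβ, hβ0, hx⟩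
    have hα0 : α ≠ 0 := by
      rintro rfl
      simp [FaithfulSMul.algebraMap_eq_zero_iff, hβ0] at hx
    refine ⟨β, α, hβ, hα, hα0, ?_⟩
    rw [← hx, Units.val_inv_eq_inv_val, inv_mul_cancel_left₀ x.ne_zero]

theorem mk0_mem_rayPrincipalUnits {f : Ideal (𝓞 F)} {α : 𝓞 F} (hα : α - 1 ∈ f)
    (hα0 : algebraMap (𝓞 F) F α ≠ 0) : Units.mk0 _ hα0 ∈ rayPrincipalUnits f :=
  ⟨α, 1, hα, by simp, one_ne_zero, by simp⟩

theorem injective_toPrincipalIdeal_comp_subtype_rayPrincipalUnits {f : Ideal (𝓞 F)}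
    (hf : ∀ ε : (𝓞 F)ˣ, (ε : 𝓞 F) - 1 ∈ f → ε = 1) :
    Function.Injective ((toPrincipalIdeal (𝓞 F) F).comp (rayPrincipalUnits f).subtype) := by
  rw [injective_iff_map_eq_one]
  rintro ⟨x, α, β, hα, hβ, hβ0, hx⟩ h
  obtain ⟨u, hu⟩ : ∃ u : (𝓞 F)ˣ, u • (x : F) = 1 := by
    rw [← FractionalIdeal.spanSingleton_eq_spanSingleton (S := (𝓞 F)⁰),
      FractionalIdeal.spanSingleton_one, ← coe_toPrincipalIdeal]
    exact congrArg Units.val h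
  have huαβ : (u : 𝓞 F) * α = β := by
    apply FaithfulSMul.algebraMap_injective (𝓞 F) F
    have hux : algebraMap (𝓞 F) F u * x = 1 := by rwa [← Algebra.smul_def]
    rw [map_mul, ← hx, ← mul_assoc, hux, one_mul]
  have hu1 : u = 1 := hf u <| by
    convert f.sub_mem hβ (f.mul_mem_left u hα) using 1
    rw [← huαβ]; ring
  rw [hu1, Units.val_one, one_mul] at huαβ
  subst huαβ
  have hβ0' : algebraMap (𝓞 F) F α ≠ 0 := by simpa [FaithfulSMul.algebraMap_eq_zero_iff]
  exact Subtype.ext <| Units.ext <| mul_eq_right₀ hβ0' |>.mp hx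

end RayGroup

namespace MonoidHom

open FractionalIdeal

variable {R K : Type*} [CommRing R] [IsDedekindDomain R] [Field K] [Algebra R K]
  [IsFractionRing R K] (χ : (FractionalIdeal R⁰ K)ˣ →* ℂˣ)

open Classical in
noncomputable def idealExtension (I : Ideal R) : ℂ :=
  if h : I = ⊥ then 0 else χ (Units.mk0 (I : FractionalIdeal R⁰ K) (coeIdeal_ne_zero.mpr h))

theorem idealExtension_of_ne_bot {I : Ideal R} (h : I ≠ ⊥) :
    χ.idealExtension I = χ (Units.mk0 (I : FractionalIdeal R⁰ K) (coeIdeal_ne_zero.mpr h)) :=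
  dif_neg h

theorem idealExtension_mul {I J : Ideal R} (hI : I ≠ ⊥) (hJ : J ≠ ⊥) :
    χ.idealExtension (I * J) = χ.idealExtension I * χ.idealExtension J := by
  rw [χ.idealExtension_of_ne_bot hI, χ.idealExtension_of_ne_bot hJ,
    χ.idealExtension_of_ne_bot (mul_ne_zero hI hJ), ← Units.val_mul, ← map_mul]
  exact congrArg (fun u => (χ u : ℂ)) (Units.ext (coeIdeal_mul I J))

theorem idealExtension_ne_zero {I : Ideal R} (hI : I ≠ ⊥) : χ.idealExtension I ≠ 0 := by
  rw [χ.idealExtension_of_ne_bot hI]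
  exact Units.ne_zero _

theorem idealExtension_span_singleton {x : R} (hx : algebraMap R K x ≠ 0) :
    χ.idealExtension (Ideal.span {x}) = χ (toPrincipalIdeal R K (Units.mk0 _ hx)) := by
  have h : Ideal.span {x} ≠ ⊥ := by
    rintro hbot
    simp_all
  rw [χ.idealExtension_of_ne_bot h]
  congr 3
  ext
  simp [coeIdeal_span_singleton]

end MonoidHom

section InfinityType

variable {F : Type*} [Field F] [NumberField F]

noncomputable def infinityTypeHom (r : (F →+* ℂ) → ℤ) : Fˣ →* ℂˣ :=
  ∏ σ : F →+* ℂ, Units.map (σ : F →* ℂ) ^ r σ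

theorem val_infinityTypeHom (r : (F →+* ℂ) → ℤ) (x : Fˣ) :
    (infinityTypeHom r x : ℂ) = ∏ σ : F →+* ℂ, σ x ^ r σ := by
  simp [infinityTypeHom]

theorem isInfinityType_of_forall_units_eq_one {f : Ideal (𝓞 F)} (hf0 : f ≠ ⊥)
    (hf : ∀ ε : (𝓞 F)ˣ, (ε : 𝓞 F) - 1 ∈ f → ε = 1) (r : (F →+* ℂ) → ℤ) :
    IsInfinityType F r := by
  have ne_bot_of_isCoprime {I : Ideal (𝓞 F)} (hI : IsCoprime I f) : I ≠ ⊥ := by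
    rintro rfl
    exact Ideal.ne_top_of_forall_units_eq_one hf (Ideal.isUnit_iff.mp (isCoprime_zero_left.mp hI))
  obtain ⟨χ, hχ⟩ := MonoidHom.exists_extension_to_complexUnits
    (injective_toPrincipalIdeal_comp_subtype_rayPrincipalUnits hf)
    ((infinityTypeHom r).comp (rayPrincipalUnits f).subtype)
  refine ⟨f, hf0, χ.idealExtension, fun I J hI hJ => ?_, fun I hI => ?_, fun α hα0 hα _ => ?_⟩
  · exact χ.idealExtension_mul (ne_bot_of_isCoprime hI) (ne_bot_of_isCoprime hJ)
  · exact χ.idealExtension_ne_zero (ne_bot_of_isCoprime hI)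
  · have hα0' : algebraMap (𝓞 F) F α ≠ 0 := by simpa [FaithfulSMul.algebraMap_eq_zero_iff]
    rw [χ.idealExtension_span_singleton hα0']
    have h := DFunLike.congr_fun hχ ⟨_, mk0_mem_rayPrincipalUnits hα hα0'⟩
    simpa [val_infinityTypeHom] using congrArg Units.val h

end InfinityType

/-- If `F` is an imaginary quadratic field, every `r ∈ ℤ[Σ]` (i.e. every pair `(r, s) ∈ ℤ²`,
indexed by the two complex embeddings) is the infinity type of an arithmetic Hecke character. -/
theorem isInfinityType_of_imaginaryQuadratic
    (F : Type*) [Field F] [NumberField F]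
    (hdeg : Module.finrank ℚ F = 2)
    (him : ∀ σ : F →+* ℂ, ¬ ComplexEmbedding.IsReal σ) :
    ∀ r : (F →+* ℂ) → ℤ, IsInfinityType F r := by
  have : IsTotallyComplex F := ⟨fun w => InfinitePlace.not_isReal_iff_isComplex.mp
    fun hw => him _ (InfinitePlace.isReal_iff.mp hw)⟩
  have hunits (ε : (𝓞 F)ˣ) : ε ∈ Units.torsion F :=
    Units.mem_torsion_of_rank_eq_zero (Units.rank_eq_zero_of_finrank_eq_two hdeg) ε
  exact isInfinityType_of_forall_units_eq_one (f := Ideal.span {((3 : ℕ) : 𝓞 F)}) (by simp)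
    fun ε hε => Units.eq_one_of_mem_torsion_of_sub_one_mem_span_natCast le_rfl (hunits ε) hε
end

section
/- Let φ be a Hecke character of F of conductor f, and let p be a prime ideal of O_F not dividing f. Let B ⊂ O_F be a complete set of representatives for the residues b mod fp whose reduction mod f lies in (O_F/f)^×. Then for nonzero ζ ∈ O_F, the modified Gauss sum φ(d^{-1}) Σ_{b∈B} φ_f(b) e_F(ζ b d^{-1}(π_f^{-1}π_p^{-1})_{v|fp}) equals N(p)·φ_f(ζ)^{-1}τ(φ) if (ζ) is coprime to f and p divides (ζ), and equals 0 otherwise. -/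
set_option synthInstance.maxHeartbeats 1000000
set_option maxHeartbeats 1000000

open NumberField

/-- `χ` is a primitive multiplicative character of conductor `f`. -/
def IsPrimitiveMulChar {F : Type*} [Field F] [NumberField F]
    (f : Ideal (𝓞 F)) (χ : MulChar (𝓞 F ⧸ f) ℂ) : Prop :=
  ∀ g : Ideal (𝓞 F), f < g →
    ∃ b : 𝓞 F, IsUnit (Ideal.Quotient.mk f b) ∧ b - 1 ∈ g ∧ χ (Ideal.Quotient.mk f b) ≠ 1

/-- A nondegenerate (primitive) additive character. -/
def IsPrimitiveAddChar {F : Type*} [Field F] [NumberField F]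
    (f : Ideal (𝓞 F)) (ψ : AddChar (𝓞 F ⧸ f) ℂ) : Prop :=
  ∀ a : 𝓞 F ⧸ f, a ≠ 0 → ∃ x : 𝓞 F ⧸ f, ψ (a * x) ≠ 1

/-!
By the Chinese remainder theorem `𝓞_F/fp ≅ 𝓞_F/f × 𝓞_F/p`, and `ψ'` is `ψ ⊗ ψp`, so the sum
factors as the twisted Gauss sum `∑_a χ(a) ψ(ζa)` times `∑_x ψp(ζx)`. By primitivity of `ψp` the
second factor is `N(p)` or `0` according as `ζ ∈ p`. If `ζ` is a unit mod `f`, the substitution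
`a ↦ ζ⁻¹a` turns the first factor into `χ(ζ)⁻¹ τ`. Otherwise some prime `q ⊇ f` contains `ζ`, and
primitivity of `χ` yields a unit `u ≡ 1 mod fq⁻¹` with `χ(u) ≠ 1`; then `ζu ≡ ζ mod f`, so the
substitution `a ↦ ua` shows that the first factor is killed by `χ(u) - 1`.
-/

lemma Ideal.ne_bot_of_finite_quotient {R : Type*} [CommRing R] [Infinite R] (I : Ideal R)
    [Finite (R ⧸ I)] : I ≠ ⊥ := by
  rintro rfl
  have : Finite R := .of_equiv _ (RingEquiv.quotientBot R).toEquiv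
  exact not_finite R

lemma Ideal.IsMaximal.isCoprime_of_not_le {R : Type*} [CommRing R] {I P : Ideal R}
    (hP : P.IsMaximal) (h : ¬ I ≤ P) : IsCoprime I P := by
  rw [Ideal.isCoprime_iff_sup_eq]
  by_contra hne
  exact h (le_sup_left.trans (hP.eq_of_le hne le_sup_right).ge)

lemma Ideal.Quotient.isUnit_mk_of_isCoprime {R : Type*} [CommRing R] {I : Ideal R} {z : R}
    (h : IsCoprime (Ideal.span {z}) I) : IsUnit (Ideal.Quotient.mk I z) := by
  obtain ⟨_, hi, j, hj, hij⟩ := Ideal.isCoprime_iff_exists.1 h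
  obtain ⟨t, rfl⟩ := Ideal.mem_span_singleton'.1 hi
  refine IsUnit.of_mul_eq_one (Ideal.Quotient.mk I t) ?_
  rw [← map_mul, ← map_one (Ideal.Quotient.mk I), Ideal.Quotient.eq, mul_comm, ← hij]
  simpa using hj

/-- The witness is `g = I q⁻¹` for a maximal ideal `q` containing both `z` and `I`. -/
lemma Ideal.exists_lt_span_singleton_mul_le_of_not_isCoprime {R : Type*} [CommRing R]
    [IsDedekindDomain R] {I : Ideal R} (hI : I ≠ ⊥) {z : R}
    (h : ¬ IsCoprime (Ideal.span {z}) I) : ∃ g : Ideal R, I < g ∧ Ideal.span {z} * g ≤ I := by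
  obtain ⟨q, hq, hle⟩ := Ideal.exists_le_maximal _ (mt Ideal.isCoprime_iff_sup_eq.2 h)
  obtain ⟨g, rfl⟩ := Ideal.dvd_iff_le.2 (le_sup_right.trans hle)
  refine ⟨g, Ideal.dvdNotUnit_iff_lt.1 ⟨right_ne_zero_of_mul hI, q, ?_, mul_comm _ _⟩, ?_⟩
  · exact mt Ideal.isUnit_iff.1 hq.ne_top
  · exact Ideal.mul_mono_left (le_sup_left.trans hle)

lemma Ideal.sum_quotient_mul_eq_mul_sum {R M : Type*} [CommRing R] [CommSemiring M]
    {I J : Ideal R} (hIJ : IsCoprime I J) [Fintype (R ⧸ I * J)] [Fintype (R ⧸ I)]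
    [Fintype (R ⧸ J)] (g : R ⧸ I → M) (h : R ⧸ J → M) :
    ∑ x : R ⧸ I * J, g (Ideal.Quotient.factor Ideal.mul_le_left x) *
        h (Ideal.Quotient.factor Ideal.mul_le_right x) = (∑ a, g a) * ∑ b, h b := by
  rw [Finset.sum_mul_sum, ← Fintype.sum_prod_type']
  exact Fintype.sum_equiv (Ideal.quotientMulEquivQuotientProd I J hIJ).toEquiv _ _ fun x => by simp

lemma Ideal.card_quotient_eq_absNorm {S : Type*} [CommRing S] [IsDedekindDomain S]
    [Module.Free ℤ S] (I : Ideal S) [Fintype (S ⧸ I)] :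
    Fintype.card (S ⧸ I) = Ideal.absNorm I := by
  rw [Ideal.absNorm_apply, Submodule.cardQuot_apply, Nat.card_eq_fintype_card]

lemma MulChar.finsum_isUnit_mul_eq_sum {ι R M : Type*} [Fintype ι] [CommMonoid R]
    [CommSemiring M] (χ : MulChar R M) (π : ι → R) (g : ι → M) :
    ∑ᶠ (i) (_ : IsUnit (π i)), χ (π i) * g i = ∑ i, χ (π i) * g i := by
  classical
  rw [finsum_eq_sum_of_fintype]
  refine Finset.sum_congr rfl fun i _ => ?_
  rw [finsum_eq_if]
  split_ifs with hi
  · rfl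
  · rw [χ.map_nonunit hi, zero_mul]

lemma MulChar.sum_units_mul_eq_sum {R M : Type*} [CommRing R] [Fintype R] [DecidableEq R]
    [CommSemiring M] (χ : MulChar R M) (g : R → M) :
    ∑ u : Rˣ, χ u * g u = ∑ a, χ a * g a := by
  refine (Finset.sum_map _ ⟨Units.val, Units.val_injective⟩ fun a => χ a * g a).symm.trans ?_
  refine Finset.sum_subset (Finset.subset_univ _) fun a _ ha => ?_
  rw [χ.map_nonunit fun hu => ha (Finset.mem_map.2 ⟨hu.unit, Finset.mem_univ _, rfl⟩), zero_mul]

lemma gaussSum_mulShift_eq_zero_of_mul_eq {R R' : Type*} [CommRing R] [Fintype R] [CommRing R']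
    [IsDomain R'] (χ : MulChar R R') (ψ : AddChar R R') {z : R} (u : Rˣ) (hu : χ u ≠ 1)
    (hzu : z * u = z) : gaussSum χ (ψ.mulShift z) = 0 := by
  have h := gaussSum_mulShift χ (ψ.mulShift z) u
  rw [AddChar.mulShift_mulShift, hzu] at h
  exact (mul_eq_zero.1 (by linear_combination h : (χ u - 1) * _ = 0)).resolve_left
    (sub_ne_zero.2 hu)

lemma finsum_isUnit_mulChar_mul_addChar_eq_gaussSum_mul_sum {R M : Type*} [CommRing R]
    [CommRing M] {I J : Ideal R} (hIJ : IsCoprime I J) [Fintype (R ⧸ I * J)] [Fintype (R ⧸ I)]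
    [Fintype (R ⧸ J)] (χ : MulChar (R ⧸ I) M) (ψ : AddChar (R ⧸ I) M)
    (ψJ : AddChar (R ⧸ J) M) (ψ' : AddChar (R ⧸ I * J) M)
    (hψ' : ∀ b : R, ψ' (Ideal.Quotient.mk (I * J) b) =
      ψ (Ideal.Quotient.mk I b) * ψJ (Ideal.Quotient.mk J b)) (z : R) :
    ∑ᶠ (b : R ⧸ I * J) (_ : IsUnit (Ideal.Quotient.factor Ideal.mul_le_left b)),
        χ (Ideal.Quotient.factor Ideal.mul_le_left b) * ψ' (Ideal.Quotient.mk (I * J) z * b) =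
      gaussSum χ (ψ.mulShift (Ideal.Quotient.mk I z)) * ∑ x, ψJ (Ideal.Quotient.mk J z * x) := by
  rw [MulChar.finsum_isUnit_mul_eq_sum, gaussSum, ← Ideal.sum_quotient_mul_eq_mul_sum hIJ]
  refine Finset.sum_congr rfl fun b _ => ?_
  obtain ⟨b, rfl⟩ := Ideal.Quotient.mk_surjective b
  simp only [← map_mul, hψ', Ideal.Quotient.factor_mk, AddChar.mulShift_apply]
  ring

section NumberField

variable {F : Type*} [Field F] [NumberField F]

lemma IsPrimitiveAddChar.isPrimitive {I : Ideal (𝓞 F)} {ψ : AddChar (𝓞 F ⧸ I) ℂ}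
    (hψ : IsPrimitiveAddChar I ψ) : ψ.IsPrimitive := fun a ha h1 => by
  obtain ⟨x, hx⟩ := hψ a ha
  exact hx (by rw [← AddChar.mulShift_apply, h1, AddChar.one_apply])

open Classical in
lemma IsPrimitiveAddChar.sum_mk_mul {I : Ideal (𝓞 F)} [Fintype (𝓞 F ⧸ I)]
    {ψ : AddChar (𝓞 F ⧸ I) ℂ} (hψ : IsPrimitiveAddChar I ψ) (z : 𝓞 F) :
    ∑ x, ψ (Ideal.Quotient.mk I z * x) = if z ∈ I then (Ideal.absNorm I : ℂ) else 0 := by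
  simp_rw [mul_comm (Ideal.Quotient.mk I z), AddChar.sum_mulShift _ hψ.isPrimitive,
    Ideal.Quotient.eq_zero_iff_mem, Ideal.card_quotient_eq_absNorm, Nat.cast_ite, Nat.cast_zero]

lemma IsPrimitiveMulChar.exists_unit_ne_one_mul_eq {f : Ideal (𝓞 F)} {χ : MulChar (𝓞 F ⧸ f) ℂ}
    (hχ : IsPrimitiveMulChar f χ) (hf : f ≠ ⊥) {z : 𝓞 F} (h : ¬ IsCoprime (Ideal.span {z}) f) :
    ∃ u : (𝓞 F ⧸ f)ˣ, χ u ≠ 1 ∧ Ideal.Quotient.mk f z * u = Ideal.Quotient.mk f z := by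
  obtain ⟨g, hfg, hzg⟩ := Ideal.exists_lt_span_singleton_mul_le_of_not_isCoprime hf h
  obtain ⟨b, hb, hb1, hχb⟩ := hχ g hfg
  refine ⟨hb.unit, hχb, ?_⟩
  rw [IsUnit.unit_spec, ← map_mul, Ideal.Quotient.eq, ← mul_sub_one]
  exact hzg (Ideal.mul_mem_mul (Ideal.mem_span_singleton_self z) hb1)

lemma IsPrimitiveMulChar.gaussSum_mulShift_mk_eq_zero {f : Ideal (𝓞 F)} [Fintype (𝓞 F ⧸ f)]
    {χ : MulChar (𝓞 F ⧸ f) ℂ} (hχ : IsPrimitiveMulChar f χ) (ψ : AddChar (𝓞 F ⧸ f) ℂ)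
    {z : 𝓞 F} (h : ¬ IsCoprime (Ideal.span {z}) f) :
    gaussSum χ (ψ.mulShift (Ideal.Quotient.mk f z)) = 0 :=
  let ⟨u, hu, hzu⟩ := hχ.exists_unit_ne_one_mul_eq (Ideal.ne_bot_of_finite_quotient f) h
  gaussSum_mulShift_eq_zero_of_mul_eq χ ψ u hu hzu

end NumberField

/-- Here `χ = φ_f`, `ψ = e_F(· d⁻¹ (π_f⁻¹)_{v∣f})`, `ψp = e_F(· d⁻¹ π_p⁻¹)`,
`ψ' = e_F(· d⁻¹ (π_f⁻¹ π_p⁻¹)_{v∣fp})` and `c = φ(d⁻¹)`, so that `τ(φ) = c ∑_b χ(b) ψ(b)`; the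
sum runs over `b mod fp` whose reduction mod `f` is a unit. -/
theorem modified_gaussSum_general
    {F : Type*} [Field F] [NumberField F]
    (f p : Ideal (𝓞 F)) (hp : p.IsPrime) (hpf : ¬ p ∣ f)
    [Fintype (𝓞 F ⧸ f)] [Fintype (𝓞 F ⧸ (f * p))] [Fintype (𝓞 F ⧸ p)]
    (χ : MulChar (𝓞 F ⧸ f) ℂ) (hχ : IsPrimitiveMulChar f χ)
    (ψ : AddChar (𝓞 F ⧸ f) ℂ)
    (ψp : AddChar (𝓞 F ⧸ p) ℂ) (hψp : IsPrimitiveAddChar p ψp)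
    (ψ' : AddChar (𝓞 F ⧸ (f * p)) ℂ)
    (hfact : ∀ b : 𝓞 F,
      ψ' (Ideal.Quotient.mk (f * p) b) =
        ψ (Ideal.Quotient.mk f b) * ψp (Ideal.Quotient.mk p b))
    [DecidableEq (𝓞 F ⧸ f)]
    (c : ℂ) (ζ : 𝓞 F) :
    (IsCoprime (Ideal.span {ζ}) f ∧ ζ ∈ p →
      c * (∑ᶠ (b : 𝓞 F ⧸ (f * p))
            (_ : IsUnit (Ideal.Quotient.factor (Ideal.mul_le_inf.trans inf_le_left : f * p ≤ f) b)),
          χ (Ideal.Quotient.factor (Ideal.mul_le_inf.trans inf_le_left : f * p ≤ f) b) *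
            ψ' (Ideal.Quotient.mk (f * p) ζ * b)) =
        (Ideal.absNorm p : ℂ) * (χ (Ideal.Quotient.mk f ζ))⁻¹ *
          (c * ∑ b : (𝓞 F ⧸ f)ˣ, χ b * ψ b)) ∧
    (¬ (IsCoprime (Ideal.span {ζ}) f ∧ ζ ∈ p) →
      c * (∑ᶠ (b : 𝓞 F ⧸ (f * p))
            (_ : IsUnit (Ideal.Quotient.factor (Ideal.mul_le_inf.trans inf_le_left : f * p ≤ f) b)),
          χ (Ideal.Quotient.factor (Ideal.mul_le_inf.trans inf_le_left : f * p ≤ f) b) *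
            ψ' (Ideal.Quotient.mk (f * p) ζ * b)) = 0) := by
  have hpmax : p.IsMaximal := hp.isMaximal (Ideal.ne_bot_of_finite_quotient p)
  have hfp : IsCoprime f p := hpmax.isCoprime_of_not_le (mt Ideal.dvd_iff_le.2 hpf)
  rw [finsum_isUnit_mulChar_mul_addChar_eq_gaussSum_mul_sum hfp χ ψ ψp ψ' hfact,
    hψp.sum_mk_mul, MulChar.sum_units_mul_eq_sum χ ψ]
  refine ⟨fun ⟨hζf, hζp⟩ => ?_, fun h => ?_⟩
  · have hu := Ideal.Quotient.isUnit_mk_of_isCoprime hζf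
    rw [if_pos hζp, ← hu.unit_spec, gaussSum_mulShift_eq, MulChar.inv_apply_eq_inv', gaussSum]
    ring
  · by_cases hζf : IsCoprime (Ideal.span {ζ}) f
    · rw [if_neg fun hζp => h ⟨hζf, hζp⟩, mul_zero, mul_zero]
    · rw [hχ.gaussSum_mulShift_mk_eq_zero ψ hζf, zero_mul, mul_zero]

/-- The modified Gauss sum at level `f·p`, for a prime `p` not dividing the conductor `f`.

Here `χ = φ_f` is the primitive multiplicative character mod `f` of the Hecke character `φ`,
`ψ = e_F(· d⁻¹ (π_f⁻¹)_{v∣f})` is the primitive additive character mod `f` (so that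
`τ(φ) = c ∑_b χ(b) ψ(b)` with `c = φ(d⁻¹)`), `ψp` is the primitive additive character
`e_F(· d⁻¹ π_p⁻¹)` mod `p`, and `ψ' = e_F(· d⁻¹ (π_f⁻¹ π_p⁻¹)_{v∣fp})` is the additive character
mod `f·p`, which factors as `ψ'(b) = ψ(b) ψp(b)`.  Summing over representatives `b mod f·p`
whose reduction mod `f` is a unit:
`c ∑_b χ(b mod f) ψ'(ζ b) = N(p) χ(ζ)⁻¹ τ(φ)` if `(ζ)` is coprime to `f` and `p ∣ (ζ)`,
and `= 0` otherwise. -/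
theorem modified_gaussSum
    {F : Type*} [Field F] [NumberField F]
    (f p : Ideal (𝓞 F)) (hp : p.IsPrime) (hpf : ¬ p ∣ f)
    [Fintype (𝓞 F ⧸ f)] [Fintype (𝓞 F ⧸ (f * p))] [Fintype (𝓞 F ⧸ p)]
    (χ : MulChar (𝓞 F ⧸ f) ℂ) (hχ : IsPrimitiveMulChar f χ)
    (ψ : AddChar (𝓞 F ⧸ f) ℂ) (hψ : IsPrimitiveAddChar f ψ)
    (ψp : AddChar (𝓞 F ⧸ p) ℂ) (hψp : IsPrimitiveAddChar p ψp)
    (ψ' : AddChar (𝓞 F ⧸ (f * p)) ℂ)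
    (hfact : ∀ b : 𝓞 F,
      ψ' (Ideal.Quotient.mk (f * p) b) =
        ψ (Ideal.Quotient.mk f b) * ψp (Ideal.Quotient.mk p b))
    [DecidableEq (𝓞 F ⧸ f)]
    (c : ℂ) (ζ : 𝓞 F) (hζ : ζ ≠ 0) :
    (IsCoprime (Ideal.span {ζ}) f ∧ ζ ∈ p →
      c * (∑ᶠ (b : 𝓞 F ⧸ (f * p))
            (_ : IsUnit (Ideal.Quotient.factor (Ideal.mul_le_inf.trans inf_le_left : f * p ≤ f) b)),
          χ (Ideal.Quotient.factor (Ideal.mul_le_inf.trans inf_le_left : f * p ≤ f) b) *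
            ψ' (Ideal.Quotient.mk (f * p) ζ * b)) =
        (Ideal.absNorm p : ℂ) * (χ (Ideal.Quotient.mk f ζ))⁻¹ *
          (c * ∑ b : (𝓞 F ⧸ f)ˣ, χ b * ψ b)) ∧
    (¬ (IsCoprime (Ideal.span {ζ}) f ∧ ζ ∈ p) →
      c * (∑ᶠ (b : 𝓞 F ⧸ (f * p))
            (_ : IsUnit (Ideal.Quotient.factor (Ideal.mul_le_inf.trans inf_le_left : f * p ≤ f) b)),
          χ (Ideal.Quotient.factor (Ideal.mul_le_inf.trans inf_le_left : f * p ≤ f) b) *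
            ψ' (Ideal.Quotient.mk (f * p) ζ * b)) = 0) :=
  modified_gaussSum_general f p hp hpf χ hχ ψ ψp hψp ψ' hfact c ζ
end
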